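/- arXiv:2310.09154 — 2 statements merged into one kernel-verified Lean document; each statement's English description precedes it below -/
import Mathlib

section
/- Let F be a nonempty set of d × d density matrices, let ρ be a d × d density matrix, and let 0 < s < R_F(ρ). Then for every σ ∈ F there exists m ∈ {2, …, d} such that S_{m,ρ,s}(σ) < 0. -/
/-!
Put `A = ((1 + s)σ - ρ) / s`, a Hermitian matrix of trace one with `ρ + s A = (1 + s) σ`. If `A`
were positive semidefinite it would be a density matrix witnessing `R_F(ρ) ≤ s`, so `A` has an
eigenvalue `-t < 0`. By Newton's identities `S_m(A)` is the elementary symmetric function `e_m` of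
the eigenvalues of `A`, and `e_0 = e_1 = 1`. If also `e_m ≥ 0` for `2 ≤ m ≤ d`, then
`0 = ∏ᵢ (t + λᵢ) = ∑ₖ e_k t^(d-k) ≥ t^d > 0`.
-/

open scoped ComplexOrder ENNReal

/-- A density matrix: positive semidefinite (hence Hermitian) with trace 1. -/
def IsDensityMatrix {d : ℕ} (A : Matrix (Fin d) (Fin d) ℂ) : Prop :=
  A.PosSemidef ∧ A.trace = 1

/-- The generalized robustness `R_F(ρ)`, valued in the extended nonnegative reals:
the infimum of `s ≥ 0` such that `(ρ + sτ)/(1 + s) ∈ F` for some density matrix `τ`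
(`+∞` if no such `s` exists). -/
noncomputable def Robustness {d : ℕ} (F : Set (Matrix (Fin d) (Fin d) ℂ))
    (ρ : Matrix (Fin d) (Fin d) ℂ) : ℝ≥0∞ :=
  ⨅ s ∈ {s : ℝ | 0 ≤ s ∧ ∃ τ, IsDensityMatrix τ ∧
      ((1 : ℂ) + (s : ℂ))⁻¹ • (ρ + (s : ℂ) • τ) ∈ F}, ENNReal.ofReal s

/-- `Spoly A m` is the recursively defined quantity `S_m(A)`. -/
noncomputable def Spoly {d : ℕ} (A : Matrix (Fin d) (Fin d) ℂ) : ℕ → ℂ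
  | 0 => 1
  | m + 1 => ((m : ℂ) + 1)⁻¹ *
      ∑ l ∈ Finset.range (m + 1), (-1 : ℂ) ^ l * (A ^ (l + 1)).trace * Spoly A (m - l)

/-- `Sres ρ s m η = S_{m,ρ,s}(η) = S_m(((1+s)η − ρ)/s)`. -/
noncomputable def Sres {d : ℕ} (ρ : Matrix (Fin d) (Fin d) ℂ) (s : ℝ) (m : ℕ)
    (η : Matrix (Fin d) (Fin d) ℂ) : ℂ :=
  Spoly ((s : ℂ)⁻¹ • (((1 : ℂ) + (s : ℂ)) • η - ρ)) m

open Finset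

theorem Multiset.esymm_map_ringHom {R S : Type*} [CommSemiring R] [CommSemiring S] (g : R →+* S)
    (s : Multiset R) (n : ℕ) : (s.map g).esymm n = g (s.esymm n) := by
  simp [esymm, powersetCard_map, map_map, map_multiset_sum, map_multiset_prod]

theorem Multiset.nonneg_of_forall_esymm_nonneg {R : Type*} [CommRing R] [LinearOrder R]
    [IsStrictOrderedRing R] {s : Multiset R} (h : ∀ k ≤ card s, 0 ≤ s.esymm k) {x : R}
    (hx : x ∈ s) : 0 ≤ x := by
  by_contra! hneg
  have hvieta := congrArg (Polynomial.eval (-x)) (prod_X_add_C_eq_sum_esymm s)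
  simp only [Polynomial.eval_multiset_prod, map_map, Function.comp_def, Polynomial.eval_add,
    Polynomial.eval_X, Polynomial.eval_C, Polynomial.eval_finsetSum, Polynomial.eval_mul,
    Polynomial.eval_pow] at hvieta
  have hzero : (s.map fun r => -x + r).prod = 0 :=
    prod_eq_zero (mem_map.mpr ⟨x, hx, neg_add_cancel x⟩)
  have hpos : 0 < ∑ k ∈ Finset.range (card s + 1), s.esymm k * (-x) ^ (card s - k) := by
    refine sum_pos' (fun k hk => mul_nonneg (h k (Nat.lt_succ_iff.mp (Finset.mem_range.mp hk)))
      (pow_nonneg (by linarith) _)) ⟨0, by simp, ?_⟩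
    simpa [esymm] using pow_pos (neg_pos.mpr hneg) _
  exact hpos.ne' (hvieta ▸ hzero)

theorem succ_mul_esymm_map_univ {ι R : Type*} [Fintype ι] [CommRing R] (f : ι → R) (m : ℕ) :
    ((m : R) + 1) * (univ.val.map f).esymm (m + 1) =
      ∑ l ∈ range (m + 1),
        (-1) ^ l * (∑ i, f i ^ (l + 1)) * (univ.val.map f).esymm (m - l) := by
  have h := congrArg (MvPolynomial.aeval f) (MvPolynomial.mul_esymm_eq_sum ι R (m + 1))
  simp only [map_mul, map_natCast, map_pow, map_neg, map_one, map_sum,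
    MvPolynomial.aeval_esymm_eq_multiset_esymm, MvPolynomial.psum, MvPolynomial.aeval_X] at h
  push_cast at h
  rw [h, sum_filter, Nat.antidiagonal_succ', sum_cons, if_neg (lt_irrefl _), zero_add, sum_map,
    ← Nat.sum_antidiagonal_swap, Nat.sum_antidiagonal_eq_sum_range_succ_mk, mul_sum]
  refine sum_congr rfl fun l hl => ?_
  have hl : l ≤ m := Nat.lt_succ_iff.mp (mem_range.mp hl)
  have hsign : (-1 : R) ^ (m + 1 + 1) * (-1) ^ (m - l) = (-1) ^ l := by
    rw [← pow_add, show m + 1 + 1 + (m - l) = l + 2 * (m - l + 1) by omega, pow_add, pow_mul]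
    simp
  simp only [Prod.swap_prod_mk, Function.Embedding.coe_prodMap, Prod.map_apply,
    Function.Embedding.refl_apply, Function.Embedding.coeFn_mk,
    if_pos (Nat.lt_succ_of_le (Nat.sub_le m l))]
  rw [← hsign]
  ring

theorem Matrix.IsHermitian.trace_pow_eq_sum_eigenvalues_pow {n 𝕜 : Type*} [Fintype n]
    [DecidableEq n] [RCLike 𝕜] {A : Matrix n n 𝕜} (hA : A.IsHermitian) (l : ℕ) :
    (A ^ l).trace = ∑ i, (hA.eigenvalues i : 𝕜) ^ l := by
  conv_lhs => rw [hA.spectral_theorem, ← map_pow, Unitary.conjStarAlgAut_apply, trace_mul_cycle,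
    Unitary.coe_star_mul_self, Matrix.one_mul, diagonal_pow, trace_diagonal]
  simp

-- The recursion defining `Spoly` is Newton's identity.
theorem spoly_eq_esymm {d : ℕ} {ι : Type*} [Fintype ι] {A : Matrix (Fin d) (Fin d) ℂ}
    (f : ι → ℂ) (hf : ∀ l, (A ^ l).trace = ∑ i, f i ^ l) (m : ℕ) :
    Spoly A m = (univ.val.map f).esymm m := by
  induction m using Nat.strong_induction_on with
  | _ m ih =>
    cases m with
    | zero => simp [Spoly, Multiset.esymm]
    | succ m =>
      rw [Spoly, inv_mul_eq_iff_eq_mul₀ (Nat.cast_add_one_ne_zero m), succ_mul_esymm_map_univ]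
      exact sum_congr rfl fun l hl => by rw [hf, ih (m - l) (by simp at hl; omega)]

theorem Matrix.IsHermitian.spoly_eq_esymm_eigenvalues {d : ℕ} {A : Matrix (Fin d) (Fin d) ℂ}
    (hA : A.IsHermitian) (m : ℕ) :
    Spoly A m = ((univ.val.map hA.eigenvalues).esymm m : ℝ) := by
  rw [spoly_eq_esymm _ hA.trace_pow_eq_sum_eigenvalues_pow, ← Complex.ofRealHom_eq_coe,
    ← Multiset.esymm_map_ringHom, Multiset.map_map]
  rfl

theorem exists_spoly_neg_of_not_posSemidef {d : ℕ} {A : Matrix (Fin d) (Fin d) ℂ}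
    (hA : A.IsHermitian) (htr : 0 ≤ A.trace) (hpsd : ¬ A.PosSemidef) :
    ∃ m ∈ Icc 2 d, Spoly A m < 0 := by
  by_contra! h
  refine hpsd (hA.posSemidef_iff_eigenvalues_nonneg.mpr fun i =>
    Multiset.nonneg_of_forall_esymm_nonneg (fun k hk => ?_)
      (Multiset.mem_map_of_mem _ (mem_univ_val i)))
  rcases Nat.lt_or_ge k 2 with hk2 | hk2
  · interval_cases k
    · simp [Multiset.esymm]
    · have hsum : (univ.val.map hA.eigenvalues).esymm 1 = ∑ i, hA.eigenvalues i := by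
        rw [Multiset.esymm, Multiset.powersetCard_one, Multiset.map_map]
        simp [Function.comp_def, Finset.sum]
      rw [hsum, ← Complex.zero_le_real, Complex.ofReal_sum]
      simpa [hA.trace_eq_sum_eigenvalues] using htr
  · have := h k (mem_Icc.mpr ⟨hk2, by simpa using hk⟩)
    rw [hA.spoly_eq_esymm_eigenvalues, ← Complex.ofReal_zero, Complex.real_lt_real] at this
    exact not_lt.mp this

theorem robustness_le_ofReal {d : ℕ} {F : Set (Matrix (Fin d) (Fin d) ℂ)}
    {ρ τ : Matrix (Fin d) (Fin d) ℂ} {s : ℝ} (hs : 0 ≤ s) (hτ : IsDensityMatrix τ)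
    (hmem : ((1 : ℂ) + (s : ℂ))⁻¹ • (ρ + (s : ℂ) • τ) ∈ F) :
    Robustness F ρ ≤ ENNReal.ofReal s :=
  iInf₂_le s ⟨hs, τ, hτ, hmem⟩

theorem exists_Sres_neg_of_lt_robustness_general {d : ℕ}
    (F : Set (Matrix (Fin d) (Fin d) ℂ))
    (hF : ∀ σ ∈ F, IsDensityMatrix σ)
    (ρ : Matrix (Fin d) (Fin d) ℂ) (hρ : IsDensityMatrix ρ)
    (s : ℝ) (hs : 0 < s) (hsR : ENNReal.ofReal s < Robustness F ρ) :
    ∀ σ ∈ F, ∃ m ∈ Finset.Icc 2 d, Sres ρ s m σ < 0 := by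
  intro σ hσF
  obtain ⟨⟨hσ, -⟩, htrσ⟩ := hF σ hσF
  have hs0 : (s : ℂ) ≠ 0 := by exact_mod_cast hs.ne'
  have h1s : (1 : ℂ) + s ≠ 0 := by exact_mod_cast (by linarith : (1 + s : ℝ) ≠ 0)
  set A := (s : ℂ)⁻¹ • (((1 : ℂ) + (s : ℂ)) • σ - ρ)
  have hs_sa : IsSelfAdjoint (s : ℂ) := Complex.conj_ofReal s
  have hA : A.IsHermitian :=
    ((hσ.smul ((IsSelfAdjoint.one ℂ).add hs_sa)).sub hρ.1.1).smul hs_sa.inv₀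
  have htr : A.trace = 1 := by
    simp only [A, Matrix.trace_smul, Matrix.trace_sub, htrσ, hρ.2, smul_eq_mul]
    field_simp
    ring
  have hσ_mix : ((1 : ℂ) + s)⁻¹ • (ρ + (s : ℂ) • A) = σ := by
    rw [smul_smul, mul_inv_cancel₀ hs0, one_smul, add_sub_cancel, smul_smul,
      inv_mul_cancel₀ h1s, one_smul]
  have hpsd : ¬ A.PosSemidef := fun hpsd =>
    hsR.not_ge (robustness_le_ofReal hs.le ⟨hpsd, htr⟩ (hσ_mix ▸ hσF))
  exact exists_spoly_neg_of_not_posSemidef hA (by rw [htr]; exact zero_le_one) hpsd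

/-- If `0 < s < R_F(ρ)`, then for every free state `σ ∈ F` there exists
`m ∈ {2, …, d}` such that `S_{m,ρ,s}(σ) < 0`. -/
theorem exists_Sres_neg_of_lt_robustness {d : ℕ}
    (F : Set (Matrix (Fin d) (Fin d) ℂ)) (hFne : F.Nonempty)
    (hF : ∀ σ ∈ F, IsDensityMatrix σ)
    (ρ : Matrix (Fin d) (Fin d) ℂ) (hρ : IsDensityMatrix ρ)
    (s : ℝ) (hs : 0 < s) (hsR : ENNReal.ofReal s < Robustness F ρ) :
    ∀ σ ∈ F, ∃ m ∈ Finset.Icc 2 d, Sres ρ s m σ < 0 :=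
  exists_Sres_neg_of_lt_robustness_general F hF ρ hρ s hs hsR
end

section
/- Let F be a nonempty closed set of d × d density matrices, let ρ be a d × d density matrix such that the generalized robustness R_F(ρ) is finite, and let s ≥ R_F(ρ) with s > 0. Then there exists σ ∈ F such that S_{m,ρ,s}(σ) ≥ 0 for every m ∈ {1, …, d}. -/
/-!
Write `W_t` for the set of `σ ∈ F` with `(1 + t)σ - ρ ⪰ 0`. A robustness witness
`σ = (ρ + tτ)/(1 + t) ∈ F` lies in `W_t`, and `W_t` grows with `t` because `σ ⪰ 0`, so
`W_t` is nonempty for every `t > s ≥ R_F(ρ)`. These are closed subsets of the compact set `F`,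
so by Cantor's intersection theorem some `σ` lies in all of them, and since the PSD cone is
closed, `(1 + s)σ - ρ ⪰ 0`. Finally `S_m` satisfies Newton's recursion with the power sums
`tr A^l = ∑ λᵢ^l`, so `S_m(A)` is the elementary symmetric polynomial `e_m` in the eigenvalues
of `A`, which is nonnegative when `A ⪰ 0`.
-/

open scoped ComplexOrder ENNReal

open Finset in
theorem MvPolynomial.succ_mul_esymm_succ (σ R : Type*) [Fintype σ] [CommRing R] (m : ℕ) :
    ((m : MvPolynomial σ R) + 1) * esymm σ R (m + 1) =
      ∑ l ∈ range (m + 1), (-1) ^ l * psum σ R (l + 1) * esymm σ R (m - l) := by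
  have h := mul_esymm_eq_sum σ R (m + 1)
  rw [sum_filter, Nat.sum_antidiagonal_eq_sum_range_succ_mk, sum_range_succ,
    if_neg (lt_irrefl _), add_zero, mul_sum, ← sum_range_reflect] at h
  push_cast at h
  rw [h]
  -- reindex by `a = (m - l, l + 1)`; the signs combine to `(-1) ^ (m + 2 + (m - l)) = (-1) ^ l`
  refine sum_congr rfl fun l hl => ?_
  have hl : l ≤ m := Nat.lt_succ_iff.mp (mem_range.mp hl)
  rw [if_pos (by omega), show m + 1 - (m - l) = l + 1 by omega, ← mul_assoc, ← mul_assoc,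
    ← pow_add, show m + 1 + 1 + (m - l) = l + 2 * (m + 1 - l) by omega, pow_add, pow_mul]
  simp only [neg_one_sq, one_pow, mul_one]
  ring

open Finset in
theorem MvPolynomial.eval_esymm_nonneg {σ R : Type*} [Fintype σ] [CommSemiring R] [PartialOrder R]
    [IsOrderedRing R] {x : σ → R} (hx : 0 ≤ x) (k : ℕ) : 0 ≤ eval x (esymm σ R k) := by
  simp only [esymm, map_sum, map_prod, eval_X]
  exact sum_nonneg fun t _ => prod_nonneg fun i _ => hx i

theorem Matrix.IsHermitian.trace_pow {𝕜 n : Type*} [RCLike 𝕜] [Fintype n] [DecidableEq n]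
    {A : Matrix n n 𝕜} (hA : A.IsHermitian) (l : ℕ) :
    (A ^ l).trace = ∑ i, (hA.eigenvalues i : 𝕜) ^ l := by
  conv_lhs => rw [hA.spectral_theorem, ← map_pow, Unitary.conjStarAlgAut_apply, trace_mul_cycle,
    Unitary.coe_star_mul_self, Matrix.one_mul, diagonal_pow, trace_diagonal]
  simp

theorem Spoly_eq_eval_esymm {d : ℕ} {ι : Type*} [Fintype ι] {A : Matrix (Fin d) (Fin d) ℂ}
    {x : ι → ℂ} (hx : ∀ l, (A ^ l).trace = ∑ i, x i ^ l) (m : ℕ) :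
    Spoly A m = MvPolynomial.eval x (MvPolynomial.esymm ι ℂ m) := by
  induction m using Nat.strong_induction_on with
  | _ m ih =>
    rcases m with _ | m
    · simp [Spoly, MvPolynomial.esymm_zero]
    have newton := congrArg (MvPolynomial.eval x) (MvPolynomial.succ_mul_esymm_succ ι ℂ m)
    simp only [map_mul, map_add, map_natCast, map_one, map_sum, map_pow, map_neg,
      MvPolynomial.psum, MvPolynomial.eval_X] at newton
    rw [Spoly, inv_mul_eq_iff_eq_mul₀ (Nat.cast_add_one_ne_zero m), newton]
    refine Finset.sum_congr rfl fun l hl => ?_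
    rw [hx, ih _ (by omega)]

theorem Spoly_nonneg_of_posSemidef {d : ℕ} {A : Matrix (Fin d) (Fin d) ℂ} (hA : A.PosSemidef)
    (m : ℕ) : 0 ≤ Spoly A m := by
  rw [Spoly_eq_eval_esymm hA.1.trace_pow]
  exact MvPolynomial.eval_esymm_nonneg (fun i => by simpa using hA.eigenvalues_nonneg i) m

open Matrix in
theorem Matrix.isClosed_setOf_posSemidef {n 𝕜 : Type*} [Fintype n] [RCLike 𝕜] :
    IsClosed {A : Matrix n n 𝕜 | A.PosSemidef} := by
  simp only [posSemidef_iff_dotProduct_mulVec, Set.ofPred_and, Set.ofPred_forall]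
  refine (isClosed_eq continuous_id.matrix_conjTranspose continuous_id).inter
    (isClosed_iInter fun x => isClosed_le continuous_const ?_)
  exact continuous_const.dotProduct (continuous_id.matrix_mulVec continuous_const)

theorem Matrix.PosSemidef.normSq_apply_le {n : Type*} [Fintype n] {A : Matrix n n ℂ}
    (hA : A.PosSemidef) (i j : n) : (Complex.normSq (A i j) : ℂ) ≤ A i i * A j j := by
  have hdet := (hA.submatrix ![i, j]).det_nonneg
  rw [det_fin_two] at hdet
  simp only [submatrix_apply, Matrix.cons_val_zero, Matrix.cons_val_one] at hdet
  rw [← hA.1.apply j i, Complex.star_def, Complex.mul_conj] at hdet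
  exact sub_nonneg.mp hdet

theorem IsDensityMatrix.norm_apply_le_one {d : ℕ} {A : Matrix (Fin d) (Fin d) ℂ}
    (hA : IsDensityMatrix A) (i j : Fin d) : ‖A i j‖ ≤ 1 := by
  have hdiag (k : Fin d) : A k k ≤ 1 := by
    rw [← hA.2]
    exact Finset.single_le_sum (f := fun l => A l l) (fun l _ => hA.1.diag_nonneg)
      (Finset.mem_univ k)
  have hnormSq : (Complex.normSq (A i j) : ℂ) ≤ 1 :=
    (hA.1.normSq_apply_le i j).trans (mul_le_one₀ (hdiag i) hA.1.diag_nonneg (hdiag j))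
  rw [← sq_le_one_iff₀ (norm_nonneg _), ← Complex.normSq_eq_norm_sq]
  exact_mod_cast hnormSq

theorem isCompact_setOf_isDensityMatrix (d : ℕ) :
    IsCompact {A : Matrix (Fin d) (Fin d) ℂ | IsDensityMatrix A} := by
  refine (isCompact_univ_pi fun _ => isCompact_univ_pi fun _ =>
    isCompact_closedBall (0 : ℂ) 1).of_isClosed_subset
      (Matrix.isClosed_setOf_posSemidef.inter (isClosed_eq continuous_id.matrix_trace
        continuous_const)) fun A hA i _ j _ => ?_
  simpa using hA.norm_apply_le_one i j

section Robustness

variable {d : ℕ} (F : Set (Matrix (Fin d) (Fin d) ℂ)) (ρ : Matrix (Fin d) (Fin d) ℂ)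

def robustnessWitnesses (t : ℝ) : Set (Matrix (Fin d) (Fin d) ℂ) :=
  {σ ∈ F | (((1 : ℂ) + (t : ℂ)) • σ - ρ).PosSemidef}

variable {F ρ}

theorem exists_lt_robustnessWitnesses_nonempty {r : ℝ} (h : Robustness F ρ < ENNReal.ofReal r) :
    ∃ t < r, (robustnessWitnesses F ρ t).Nonempty := by
  simp only [Robustness, iInf_lt_iff] at h
  obtain ⟨t, ⟨ht, τ, hτ, hσ⟩, htr⟩ := h
  refine ⟨t, (ENNReal.ofReal_lt_ofReal_iff_of_nonneg ht).mp htr, _, hσ, ?_⟩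
  have hne : (1 : ℂ) + t ≠ 0 := by exact_mod_cast (by positivity : (1 : ℝ) + t ≠ 0)
  rw [smul_smul, mul_inv_cancel₀ hne, one_smul, add_sub_cancel_left]
  exact hτ.1.smul (by exact_mod_cast ht)

theorem robustnessWitnesses_mono (hF : ∀ σ ∈ F, σ.PosSemidef) :
    Monotone (robustnessWitnesses F ρ) := by
  intro t t' htt' σ ⟨hσF, hσ⟩
  refine ⟨hσF, ?_⟩
  have hsplit : ((1 : ℂ) + (t' : ℂ)) • σ - ρ =
      (((1 : ℂ) + (t : ℂ)) • σ - ρ) + ((t' - t : ℝ) : ℂ) • σ := by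
    push_cast; module
  rw [hsplit]
  exact hσ.add ((hF σ hσF).smul (by exact_mod_cast sub_nonneg.mpr htt'))

theorem isClosed_robustnessWitnesses (hFc : IsClosed F) (t : ℝ) :
    IsClosed (robustnessWitnesses F ρ t) :=
  hFc.inter (Matrix.isClosed_setOf_posSemidef.preimage
    ((continuous_const_smul _).sub continuous_const))

theorem robustnessWitnesses_nonempty_of_robustness_le (hFc : IsClosed F)
    (hF : ∀ σ ∈ F, IsDensityMatrix σ) {s : ℝ} (hs : 0 ≤ s)
    (hsR : Robustness F ρ ≤ ENNReal.ofReal s) : (robustnessWitnesses F ρ s).Nonempty := by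
  have hFcpt : IsCompact F := (isCompact_setOf_isDensityMatrix d).of_isClosed_subset hFc hF
  have hmono := robustnessWitnesses_mono (ρ := ρ) fun σ hσ => (hF σ hσ).1
  have : Nonempty (Set.Ioi s) := Set.nonempty_Ioi_subtype
  have hne (t : Set.Ioi s) : (robustnessWitnesses F ρ t).Nonempty := by
    obtain ⟨t₀, ht₀, hW⟩ := exists_lt_robustnessWitnesses_nonempty <| hsR.trans_lt <|
      (ENNReal.ofReal_lt_ofReal_iff (hs.trans_lt t.2)).mpr t.2
    exact hW.mono (hmono ht₀.le)
  obtain ⟨σ, hσ⟩ := IsCompact.nonempty_iInter_of_directed_nonempty_isCompact_isClosed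
    (fun t : Set.Ioi s => robustnessWitnesses F ρ t)
    (fun t t' => ⟨⟨min t t', Set.mem_Ioi.mpr (lt_min t.2 t'.2)⟩,
      hmono (min_le_left _ _), hmono (min_le_right _ _)⟩)
    hne (fun t => hFcpt.of_isClosed_subset (isClosed_robustnessWitnesses hFc t) fun _ h => h.1)
    (fun t => isClosed_robustnessWitnesses hFc t)
  have hσt (t : ℝ) (ht : t ∈ Set.Ioi s) : σ ∈ robustnessWitnesses F ρ t :=
    Set.mem_iInter.mp hσ ⟨t, ht⟩
  have hclosed : IsClosed {t : ℝ | (((1 : ℂ) + (t : ℂ)) • σ - ρ).PosSemidef} :=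
    Matrix.isClosed_setOf_posSemidef.preimage (by fun_prop)
  refine ⟨σ, (hσt (s + 1) (by simp)).1, ?_⟩
  exact closure_minimal (fun t ht => (hσt t ht).2) hclosed
    (by rw [closure_Ioi]; exact Set.self_mem_Ici)

end Robustness

theorem exists_Sres_nonneg_of_robustness_le_general {d : ℕ}
    (F : Set (Matrix (Fin d) (Fin d) ℂ)) (hFc : IsClosed F)
    (hF : ∀ σ ∈ F, IsDensityMatrix σ)
    (ρ : Matrix (Fin d) (Fin d) ℂ)
    (s : ℝ) (hs : 0 < s) (hsR : Robustness F ρ ≤ ENNReal.ofReal s) :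
    ∃ σ ∈ F, ∀ m ∈ Finset.Icc 1 d, 0 ≤ Sres ρ s m σ := by
  obtain ⟨σ, hσF, hσ⟩ := robustnessWitnesses_nonempty_of_robustness_le hFc hF hs.le hsR
  refine ⟨σ, hσF, fun m _ => Spoly_nonneg_of_posSemidef (hσ.smul ?_) m⟩
  exact_mod_cast inv_nonneg.mpr hs.le

/-- If `F` is nonempty and closed, `R_F(ρ)` is finite, and `s ≥ R_F(ρ)` with `s > 0`,
then there exists `σ ∈ F` with `S_{m,ρ,s}(σ) ≥ 0` for every `m ∈ {1, …, d}`. -/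
theorem exists_Sres_nonneg_of_robustness_le {d : ℕ}
    (F : Set (Matrix (Fin d) (Fin d) ℂ)) (hFne : F.Nonempty) (hFc : IsClosed F)
    (hF : ∀ σ ∈ F, IsDensityMatrix σ)
    (ρ : Matrix (Fin d) (Fin d) ℂ) (hρ : IsDensityMatrix ρ)
    (hfin : Robustness F ρ ≠ ⊤)
    (s : ℝ) (hs : 0 < s) (hsR : Robustness F ρ ≤ ENNReal.ofReal s) :
    ∃ σ ∈ F, ∀ m ∈ Finset.Icc 1 d, 0 ≤ Sres ρ s m σ :=
  exists_Sres_nonneg_of_robustness_le_general F hFc hF ρ s hs hsR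
end
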